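/- Let K ⊆ 𝕋V be an isotropic subspace such that pr₁ restricted to K is injective, and let W ⊆ 𝕋V be a subspace with K ⊆ W ⊆ K^⊥, dim W = dim V, and ⟨w, w⟩ > 0 for every w ∈ W with w ∉ K (a fibrewise pre-K-transverse generalised metric). Then there is a unique pair (g, b) of bilinear forms on V with g symmetric and b alternating such that W = gr(g + b); moreover g is positive semidefinite, its radical {v ∈ V : g(v, w) = 0 for all w ∈ V} equals pr₁(K), g(v, v) > 0 for every v ∉ pr₁(K), and K = {(u, b(u, ·)) : u ∈ pr₁(K)}. -/

import Mathlib

/-! Since `⟨x, x⟩ = 2 x.2(x.1)`, an element of `W` with `x.1 = 0` is null, so it lies in `K` by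
positivity and vanishes because `pr₁` is injective on `K`. With `dim W = dim V`, `W` is then the
graph of a bilinear form, which splits uniquely as `g + b` with `g` symmetric and `b` alternating.
On this graph `⟨(v, (g + b) v), (w, (g + b) w)⟩ = 2 g(v, w)`: hence `W ⊆ K^⊥` puts `pr₁(K)` in the
radical of `g`, and positivity off `K` makes `g(v, v) > 0` off `pr₁(K)`. -/

/-- The hyperbolic pairing on the double `𝕋V = V × V*`:
`⟨(v, α), (w, β)⟩ = α(w) + β(v)`. -/
noncomputable def hyp (V : Type*) [AddCommGroup V] [Module ℝ V] :
    LinearMap.BilinForm ℝ (V × Module.Dual ℝ V) :=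
  LinearMap.mk₂ ℝ (fun x y => x.2 y.1 + y.2 x.1)
    (fun x x' y => by
      simp only [Prod.fst_add, Prod.snd_add, LinearMap.add_apply, map_add]; ring)
    (fun c x y => by
      simp only [Prod.smul_fst, Prod.smul_snd, LinearMap.smul_apply, map_smul, smul_eq_mul]; ring)
    (fun x y y' => by
      simp only [Prod.fst_add, Prod.snd_add, LinearMap.add_apply, map_add]; ring)
    (fun c x y => by
      simp only [Prod.smul_fst, Prod.smul_snd, LinearMap.smul_apply, map_smul, smul_eq_mul]; ring)

open LinearMap (BilinForm)

theorem LinearMap.graph_injective {R M N : Type*} [Ring R] [AddCommGroup M] [Module R M]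
    [AddCommGroup N] [Module R N] :
    Function.Injective (graph : (M →ₗ[R] N) → Submodule R (M × N)) := by
  intro f g h
  ext v
  have hv : (v, f v) ∈ graph g := h ▸ (mem_graph_iff f _).2 rfl
  exact (mem_graph_iff g _).1 hv

theorem Submodule.exists_eq_graph_of_finrank_eq {K M N : Type*} [Field K]
    [AddCommGroup M] [Module K M] [AddCommGroup N] [Module K N] [FiniteDimensional K M]
    (W : Submodule K (M × N)) (hW : ∀ x ∈ W, x.1 = 0 → x = 0)
    (hdim : Module.finrank K W = Module.finrank K M) :
    ∃ f : M →ₗ[K] N, W = LinearMap.graph f := by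
  set φ := (LinearMap.fst K M N).comp W.subtype
  have hinj : Function.Injective φ :=
    (injective_iff_map_eq_zero φ).2 fun x hx => Subtype.ext (hW x x.2 hx)
  have : FiniteDimensional K W := .of_injective φ hinj
  exact W.exists_eq_graph
    ⟨hinj, (LinearMap.injective_iff_surjective_of_finrank_eq_finrank hdim).1 hinj⟩

namespace LinearMap.BilinForm

variable {K M : Type*} [Field K] [NeZero (2 : K)] [AddCommGroup M] [Module K M]

theorem existsUnique_isSymm_isAlt_add_eq (B : BilinForm K M) :
    ∃! p : BilinForm K M × BilinForm K M, p.1.IsSymm ∧ p.2.IsAlt ∧ p.1 + p.2 = B := by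
  refine ⟨((2 : K)⁻¹ • (B + B.flip), (2 : K)⁻¹ • (B - B.flip)),
    ⟨⟨fun v w => ?_⟩, fun v => ?_, ?_⟩, ?_⟩
  · simp only [smul_apply, add_apply, flip_apply, add_comm]
  · simp only [smul_apply, sub_apply, flip_apply, sub_self, smul_zero]
  · ext v w
    simp only [add_apply, smul_apply, sub_apply, flip_apply, smul_eq_mul]
    field_simp
    ring
  · rintro ⟨g, b⟩ ⟨hg, hb, rfl⟩
    have hflip : (g + b).flip = g - b := by
      ext v w
      simp [hg.eq w v, ← hb.neg_eq v w, sub_eq_add_neg]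
    ext v w <;>
    · simp only [hflip, add_apply, sub_apply, smul_apply, smul_eq_mul]
      field_simp
      ring

end LinearMap.BilinForm

theorem hyp_apply {V : Type*} [AddCommGroup V] [Module ℝ V] (x y : V × Module.Dual ℝ V) :
    hyp V x y = x.2 y.1 + y.2 x.1 := rfl

section GraphOfSymmAddAlt

variable {V : Type*} [AddCommGroup V] [Module ℝ V] {g b : BilinForm ℝ V}
  {K : Submodule ℝ (V × Module.Dual ℝ V)}

theorem hyp_graph_eq_two_mul (hg : g.IsSymm) (hb : b.IsAlt) (v w : V) :
    hyp V (v, (g + b) v) (w, (g + b) w) = 2 * g v w := by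
  rw [hyp_apply, LinearMap.add_apply, LinearMap.add_apply, LinearMap.add_apply,
    LinearMap.add_apply, hg.eq w v, ← hb.neg_eq v w]
  ring

theorem apply_eq_zero_of_mem_map_fst (hg : g.IsSymm) (hb : b.IsAlt)
    (hKW : K ≤ LinearMap.graph (g + b))
    (hWK : LinearMap.graph (g + b) ≤ LinearMap.BilinForm.orthogonal (hyp V) K)
    (v : V) (hv : v ∈ K.map (LinearMap.fst ℝ V (Module.Dual ℝ V))) (w : V) : g v w = 0 := by
  obtain ⟨y, hyK, rfl⟩ := hv
  have hy : y = (y.1, (g + b) y.1) := Prod.ext rfl ((LinearMap.mem_graph_iff _ _).1 (hKW hyK))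
  have horth : hyp V y (w, (g + b) w) = 0 := hWK ((LinearMap.mem_graph_iff _ _).2 rfl) y hyK
  rw [hy, hyp_graph_eq_two_mul hg hb] at horth
  simpa using horth

theorem apply_self_pos_of_not_mem_map_fst (hg : g.IsSymm) (hb : b.IsAlt)
    (hpos : ∀ x ∈ LinearMap.graph (g + b), x ∉ K → 0 < hyp V x x)
    (v : V) (hv : v ∉ K.map (LinearMap.fst ℝ V (Module.Dual ℝ V))) : 0 < g v v := by
  have h := hpos (v, (g + b) v) ((LinearMap.mem_graph_iff _ _).2 rfl) fun h => hv ⟨_, h, rfl⟩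
  rw [hyp_graph_eq_two_mul hg hb] at h
  linarith

theorem mem_iff_fst_mem_map_and_snd_eq (hKW : K ≤ LinearMap.graph (g + b))
    (hrad : ∀ v ∈ K.map (LinearMap.fst ℝ V (Module.Dual ℝ V)), ∀ w, g v w = 0)
    (x : V × Module.Dual ℝ V) :
    x ∈ K ↔ x.1 ∈ K.map (LinearMap.fst ℝ V (Module.Dual ℝ V)) ∧ x.2 = b x.1 := by
  have hsnd : ∀ y ∈ K, y.2 = b y.1 := fun y hy => by
    ext w
    rw [(LinearMap.mem_graph_iff _ _).1 (hKW hy), LinearMap.add_apply, LinearMap.add_apply,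
      hrad y.1 ⟨y, hy, rfl⟩, zero_add]
  refine ⟨fun hx => ⟨⟨x, hx, rfl⟩, hsnd x hx⟩, ?_⟩
  rintro ⟨⟨y, hyK, hxy⟩, hx⟩
  have : x = y := Prod.ext hxy.symm (by rw [hx, hsnd y hyK, ← hxy]; rfl)
  exact this ▸ hyK

end GraphOfSymmAddAlt

theorem eq_zero_of_mem_of_fst_eq_zero {V : Type*} [AddCommGroup V] [Module ℝ V]
    {K W : Submodule ℝ (V × Module.Dual ℝ V)}
    (hKinj : ∀ x ∈ K, ∀ y ∈ K, x.1 = y.1 → x = y)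
    (hpos : ∀ x ∈ W, x ∉ K → 0 < hyp V x x) (x : V × Module.Dual ℝ V) (hx : x ∈ W)
    (h1 : x.1 = 0) : x = 0 := by
  have hxK : x ∈ K := by
    by_contra hxK
    have := hpos x hx hxK
    simp [hyp_apply, h1] at this
  exact hKinj x hxK 0 K.zero_mem h1

theorem stmt16_general (V : Type*) [AddCommGroup V] [Module ℝ V] [FiniteDimensional ℝ V]
    (K W : Submodule ℝ (V × Module.Dual ℝ V))
    (hKinj : ∀ x ∈ K, ∀ y ∈ K, x.1 = y.1 → x = y)
    (hKW : K ≤ W) (hWK : W ≤ LinearMap.BilinForm.orthogonal (hyp V) K)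
    (hdim : Module.finrank ℝ W = Module.finrank ℝ V)
    (hpos : ∀ x ∈ W, x ∉ K → 0 < hyp V x x) :
    (∃! p : LinearMap.BilinForm ℝ V × LinearMap.BilinForm ℝ V,
        (∀ v w, p.1 v w = p.1 w v) ∧ (∀ v, p.2 v v = 0) ∧
        W = LinearMap.graph (p.1 + p.2)) ∧
    (∀ g b : LinearMap.BilinForm ℝ V, (∀ v w, g v w = g w v) → (∀ v, b v v = 0) →
      W = LinearMap.graph (g + b) →
      ((∀ v : V, 0 ≤ g v v) ∧
        {v : V | ∀ w, g v w = 0}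
          = ↑(Submodule.map (LinearMap.fst ℝ V (Module.Dual ℝ V)) K) ∧
        (∀ v : V, v ∉ Submodule.map (LinearMap.fst ℝ V (Module.Dual ℝ V)) K → 0 < g v v) ∧
        (∀ x : V × Module.Dual ℝ V,
          x ∈ K ↔ x.1 ∈ Submodule.map (LinearMap.fst ℝ V (Module.Dual ℝ V)) K ∧
            x.2 = b x.1))) := by
  obtain ⟨B, rfl⟩ :=
    W.exists_eq_graph_of_finrank_eq (eq_zero_of_mem_of_fst_eq_zero hKinj hpos) hdim
  refine ⟨?_, fun g b hg hb hgr => ?_⟩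
  · simpa only [LinearMap.graph_injective.eq_iff, eq_comm (a := B),
      LinearMap.BilinForm.isSymm_def, LinearMap.BilinForm.IsAlt, LinearMap.IsAlt] using
      LinearMap.BilinForm.existsUnique_isSymm_isAlt_add_eq B
  obtain rfl := LinearMap.graph_injective hgr
  have hrad := apply_eq_zero_of_mem_map_fst ⟨hg⟩ hb hKW hWK
  have hpos' := apply_self_pos_of_not_mem_map_fst ⟨hg⟩ hb hpos
  refine ⟨fun v => ?_, ?_, hpos', mem_iff_fst_mem_map_and_snd_eq hKW hrad⟩
  · by_cases hv : v ∈ K.map (LinearMap.fst ℝ V (Module.Dual ℝ V))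
    · exact (hrad v hv v).ge
    · exact (hpos' v hv).le
  · ext v
    exact ⟨fun h => by_contra fun hv => (hpos' v hv).ne' (h v), hrad v⟩

/-- A fibrewise pre-`K`-transverse generalised metric `W` is the graph of a unique pair
`(g, b)` with `g` symmetric and `b` alternating; moreover `g` is positive semidefinite with
radical `pr₁(K)`, positive on the complement of `pr₁(K)`, and
`K = {(u, b(u, ·)) : u ∈ pr₁(K)}`. -/
theorem stmt16 (V : Type*) [AddCommGroup V] [Module ℝ V] [FiniteDimensional ℝ V]
    (K W : Submodule ℝ (V × Module.Dual ℝ V))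
    (hKiso : K ≤ LinearMap.BilinForm.orthogonal (hyp V) K)
    (hKinj : ∀ x ∈ K, ∀ y ∈ K, x.1 = y.1 → x = y)
    (hKW : K ≤ W) (hWK : W ≤ LinearMap.BilinForm.orthogonal (hyp V) K)
    (hdim : Module.finrank ℝ W = Module.finrank ℝ V)
    (hpos : ∀ x ∈ W, x ∉ K → 0 < hyp V x x) :
    (∃! p : LinearMap.BilinForm ℝ V × LinearMap.BilinForm ℝ V,
        (∀ v w, p.1 v w = p.1 w v) ∧ (∀ v, p.2 v v = 0) ∧
        W = LinearMap.graph (p.1 + p.2)) ∧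
    (∀ g b : LinearMap.BilinForm ℝ V, (∀ v w, g v w = g w v) → (∀ v, b v v = 0) →
      W = LinearMap.graph (g + b) →
      ((∀ v : V, 0 ≤ g v v) ∧
        {v : V | ∀ w, g v w = 0}
          = ↑(Submodule.map (LinearMap.fst ℝ V (Module.Dual ℝ V)) K) ∧
        (∀ v : V, v ∉ Submodule.map (LinearMap.fst ℝ V (Module.Dual ℝ V)) K → 0 < g v v) ∧
        (∀ x : V × Module.Dual ℝ V,
          x ∈ K ↔ x.1 ∈ Submodule.map (LinearMap.fst ℝ V (Module.Dual ℝ V)) K ∧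
            x.2 = b x.1))) :=
  stmt16_general V K W hKinj hKW hWK hdim hpos
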